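/- Let P be an n×n substochastic matrix (nonnegative entries with row sums at most 1) such that for every state i there exists k ≥ 0 and a state j with (P^k)_{ij} > 0 and the j-th row sum of P strictly less than 1. Then the spectral radius of P is strictly less than 1, and hence I − P is invertible. -/

import Mathlib

/-!
Row sums of the powers `P ^ k` are bounded by `1` and non-increasing in `k`. If state `i`
reaches a leaky row `j` in `k` steps, the row sum of `P ^ (k + 1)` at `i` drops below `1`;
taking `N` beyond all these `k + 1`, every row sum of `P ^ N` is below `1`, i.e. `‖P ^ N‖ < 1`
in the `ℓ∞` operator norm. For `μ` in the spectrum, `μ ^ N` lies in the spectrum of `P ^ N`,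
so `‖μ‖ ^ N ≤ ‖P ^ N‖ < 1`. The same bound over `ℝ` keeps `1` out of the spectrum of `P`,
which is the invertibility of `1 - P`.
-/

open Matrix Finset

theorem spectrum.norm_lt_one_of_norm_pow_lt_one {𝕜 A : Type*} [NormedField 𝕜] [NormedRing A]
    [NormedAlgebra 𝕜 A] [CompleteSpace A] [NormOneClass A] {a : A} {N : ℕ}
    (ha : ‖a ^ N‖ < 1) {k : 𝕜} (hk : k ∈ spectrum 𝕜 a) : ‖k‖ < 1 := by
  have hkN : ‖k‖ ^ N < 1 ^ N := by
    rw [one_pow, ← norm_pow]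
    exact (norm_le_norm_of_mem (pow_mem_pow a N hk)).trans_lt ha
  exact lt_of_pow_lt_pow_left₀ N zero_le_one hkN

namespace Matrix

section LinftyOp

attribute [local instance] Matrix.linftyOpNormedAddCommGroup

theorem linfty_opNorm_lt_of_forall_sum_norm_lt {m n α : Type*} [Fintype m] [Fintype n]
    [NormedAddCommGroup α] {A : Matrix m n α} {r : ℝ} (hr : 0 < r)
    (h : ∀ i, ∑ j, ‖A i j‖ < r) : ‖A‖ < r := by
  lift r to NNReal using hr.le
  rw [← coe_nnnorm, NNReal.coe_lt_coe, linfty_opNNNorm_def,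
    Finset.sup_lt_iff (by exact_mod_cast hr)]
  intro i _
  rw [← NNReal.coe_lt_coe, NNReal.coe_sum]
  exact h i

end LinftyOp

variable {ι α : Type*} [Fintype ι] [DecidableEq ι] [Semiring α]

theorem sum_pow_add_apply (P : Matrix ι ι α) (a b : ℕ) (i : ι) :
    ∑ j, (P ^ (a + b)) i j = ∑ l, (P ^ a) i l * ∑ j, (P ^ b) l j := by
  simp only [pow_add, mul_apply, Finset.mul_sum]
  exact Finset.sum_comm

variable [LinearOrder α] [IsStrictOrderedRing α] {P : Matrix ι ι α}

theorem sum_pow_add_apply_le (hP : ∀ i j, 0 ≤ P i j) {a b : ℕ}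
    (hb : ∀ l, ∑ j, (P ^ b) l j ≤ 1) (i : ι) :
    ∑ j, (P ^ (a + b)) i j ≤ ∑ j, (P ^ a) i j := by
  rw [sum_pow_add_apply]
  exact sum_le_sum fun l _ => mul_le_of_le_one_right (pow_apply_nonneg hP a i l) (hb l)

variable (hP : ∀ i j, 0 ≤ P i j) (hrow : ∀ i, ∑ j, P i j ≤ 1)
include hP hrow

theorem sum_pow_apply_le_one (k : ℕ) (i : ι) : ∑ j, (P ^ k) i j ≤ 1 := by
  induction k generalizing i with
  | zero => simp [one_apply]
  | succ k ih => exact (sum_pow_add_apply_le hP (by simpa using hrow) i).trans (ih i)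

theorem sum_pow_succ_apply_lt_one {k : ℕ} {i j : ι} (hij : 0 < (P ^ k) i j)
    (hj : ∑ j', P j j' < 1) : ∑ j', (P ^ (k + 1)) i j' < 1 := by
  calc ∑ j', (P ^ (k + 1)) i j' = ∑ l, (P ^ k) i l * ∑ j', (P ^ 1) l j' :=
        sum_pow_add_apply P k 1 i
    _ < ∑ l, (P ^ k) i l := by
        refine sum_lt_sum (fun l _ => ?_) ⟨j, mem_univ j, ?_⟩
        · exact mul_le_of_le_one_right (pow_apply_nonneg hP k i l) (by simpa using hrow l)
        · exact mul_lt_of_lt_one_right hij (by simpa using hj)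
    _ ≤ 1 := sum_pow_apply_le_one hP hrow k i

theorem exists_forall_sum_pow_apply_lt_one
    (hreach : ∀ i, ∃ (k : ℕ) (j : ι), 0 < (P ^ k) i j ∧ ∑ j', P j j' < 1) :
    ∃ N, ∀ i, ∑ j, (P ^ N) i j < 1 := by
  choose k j hkj hj using hreach
  refine ⟨univ.sup fun i => k i + 1, fun i => ?_⟩
  obtain ⟨m, hm⟩ := Nat.exists_eq_add_of_le (le_sup (f := fun i => k i + 1) (mem_univ i))
  rw [hm]
  exact (sum_pow_add_apply_le hP (sum_pow_apply_le_one hP hrow m) i).trans_lt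
    (sum_pow_succ_apply_lt_one hP hrow (hkj i) (hj i))

end Matrix

attribute [local instance] Matrix.linftyOpNormedRing Matrix.linftyOpNormedAlgebra

/-- A substochastic matrix in which every state can reach (in some number of steps, with
positive probability) a state whose row sum is strictly less than 1 has spectral radius
strictly less than 1; hence `I - P` is invertible. -/
theorem substochastic_spectral_radius_lt_one {n : ℕ} (P : Matrix (Fin n) (Fin n) ℝ)
    (hnonneg : ∀ i j, 0 ≤ P i j) (hrow : ∀ i, ∑ j, P i j ≤ 1)
    (hreach : ∀ i : Fin n, ∃ (k : ℕ) (j : Fin n), 0 < (P ^ k) i j ∧ ∑ j', P j j' < 1) :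
    (∀ μ ∈ spectrum ℂ (P.map (fun x : ℝ => (x : ℂ))), ‖μ‖ < 1) ∧ IsUnit (1 - P) := by
  rcases isEmpty_or_nonempty (Fin n) with hn | hn
  · exact ⟨by simp [spectrum.of_subsingleton], isUnit_of_subsingleton _⟩
  obtain ⟨N, hN⟩ := exists_forall_sum_pow_apply_lt_one hnonneg hrow hreach
  have hrowN : ∀ i, ∑ j, ‖(P ^ N) i j‖ < 1 := fun i => by
    simpa only [Real.norm_of_nonneg (pow_apply_nonneg hnonneg N i _)] using hN i
  have hPN : ‖P ^ N‖ < 1 := linfty_opNorm_lt_of_forall_sum_norm_lt one_pos hrowN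
  have hPN_complex : ‖P.map (fun x : ℝ => (x : ℂ)) ^ N‖ < 1 := by
    rw [show P.map (fun x : ℝ => (x : ℂ)) ^ N = (P ^ N).map (fun x : ℝ => (x : ℂ)) from
      (map_pow Complex.ofRealHom.mapMatrix P N).symm]
    exact linfty_opNorm_lt_of_forall_sum_norm_lt one_pos (by simpa using hrowN)
  refine ⟨fun μ hμ => spectrum.norm_lt_one_of_norm_pow_lt_one hPN_complex hμ, ?_⟩
  have h1 : (1 : ℝ) ∉ spectrum ℝ P := fun h =>
    (spectrum.norm_lt_one_of_norm_pow_lt_one hPN h).ne norm_one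
  simpa [spectrum.mem_iff] using h1
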